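/- Let q ∈ [1,3], ε ∈ (0,1), C₀, C₁ > 0. Let (r_j)_{j≥1} be a sequence of real numbers with r_j > 1 for all j and #{j : r_j ≤ T} ≤ C₀·T³ for all T ≥ 1, and let (c_j)_{j≥1} be complex numbers satisfying Σ_{j : r_j ≤ T} |c_j|² ≤ C₁·T^{q+ε} for all T ≥ 1. Then there exists a constant C₂ = C₂(q, ε, C₀, C₁) > 0 such that for every R ≥ 1, every η ∈ (0,1) and every sign s ∈ {+1,−1}, the series Σ_j h_±(r_j)·c_j converges absolutely and |Σ_j h_±(r_j)·c_j| ≤ C₂·R·e^{R}·η^{−(q−1)/2−ε}. -/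

import Mathlib

open MeasureTheory

/-- The Selberg transform of the indicator of a hyperbolic ball of radius `ρ` in `ℍ³`,
as a function of a real spectral parameter `r`. -/
noncomputable def hSel (ρ r : ℝ) : ℝ :=
  (4 * Real.pi / r) * ∫ u in (0:ℝ)..ρ, Real.sin (r * u) * Real.sinh u

/-- The smoothed Selberg transform `h_± = h_{R+sη} · h_η / μ(B_η)`,
where `μ(B_η) = π(sinh(2η) − 2η)`. -/
noncomputable def hPM (R η s r : ℝ) : ℝ :=
  hSel (R + s * η) r * hSel η r / (Real.pi * (Real.sinh (2 * η) - 2 * η))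

/-!
The closed form of `∫₀^ρ sin(ru) sinh u du` gives `|h_ρ(r)| ≤ 4π e^ρ / r²`, and for the small
ball both `|h_η(r)| ≤ μ(B_η)` and `|h_η(r)| ≤ 8π η cosh η / r²`, while `μ(B_η) ≥ 4πη³/3`.
Interpolating between the last two, `|h_η(r)| / μ(B_η) ≪ (ηr)^(-A)` with
`A = (q - 1)/2 + ε ∈ [0, 2]`, so `|h_±(r)| ≪ e^R η^(-A) r^(-2-A)`. On the dyadic shell
`2^m ≤ r_j < 2^(m+1)`, Cauchy–Schwarz with the Weyl law and the variance bound gives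
`∑ |c_j| ≪ 2^(m(3+q+ε)/2)`, which `r_j^(-2-A)` beats by a factor `2^(-mε/2)`: the shells
contribute a convergent geometric series.
-/

open Real Set

lemma sinh_le_mul_cosh {x : ℝ} (hx : 0 ≤ x) : sinh x ≤ x * cosh x := by
  rcases hx.eq_or_lt with rfl | hx
  · simp
  obtain ⟨ξ, ⟨hξ0, hξx⟩, hξ⟩ := exists_hasDerivAt_eq_slope sinh cosh hx
    continuous_sinh.continuousOn fun y _ => hasDerivAt_sinh y
  rw [sinh_zero, sub_zero, sub_zero, eq_div_iff hx.ne'] at hξ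
  rw [← hξ, mul_comm]
  gcongr
  exact cosh_le_cosh.mpr (by rw [abs_of_pos hξ0, abs_of_pos hx]; exact hξx.le)

lemma integral_sinh_sq (b : ℝ) :
    ∫ u in (0:ℝ)..b, sinh u ^ 2 = (sinh (2 * b) - 2 * b) / 4 := by
  have hderiv : ∀ u : ℝ, HasDerivAt (fun u => (sinh (2 * u) - 2 * u) / 4) (sinh u ^ 2) u := by
    intro u
    refine ((((hasDerivAt_id u).const_mul 2).sinh.sub
      ((hasDerivAt_id u).const_mul 2)).div_const 4).congr_deriv ?_
    rw [id, mul_one, cosh_two_mul, cosh_sq]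
    ring
  rw [intervalIntegral.integral_eq_sub_of_hasDerivAt (fun u _ => hderiv u)
    ((continuous_sinh.pow 2).intervalIntegrable _ _)]
  simp

lemma cube_le_sinh_two_mul_sub {η : ℝ} (hη : 0 ≤ η) : 4 * η ^ 3 / 3 ≤ sinh (2 * η) - 2 * η := by
  have hmono : ∫ u in (0:ℝ)..η, u ^ 2 ≤ ∫ u in (0:ℝ)..η, sinh u ^ 2 :=
    intervalIntegral.integral_mono_on hη ((continuous_pow 2).intervalIntegrable _ _)
      ((continuous_sinh.pow 2).intervalIntegrable _ _) fun u hu =>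
        pow_le_pow_left₀ hu.1 (self_le_sinh_iff.mpr hu.1) 2
  rw [integral_pow, integral_sinh_sq] at hmono
  linarith

lemma integral_sin_mul_sinh (a ρ : ℝ) :
    ∫ u in (0:ℝ)..ρ, sin (a * u) * sinh u
      = (sin (a * ρ) * cosh ρ - a * cos (a * ρ) * sinh ρ) / (1 + a ^ 2) := by
  have hderiv : ∀ u : ℝ, HasDerivAt
      (fun u => (sin (a * u) * cosh u - a * cos (a * u) * sinh u) / (1 + a ^ 2))
      (sin (a * u) * sinh u) u := by
    intro u
    have hau : HasDerivAt (fun u => a * u) a u := by simpa using (hasDerivAt_id u).const_mul a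
    refine (((hau.sin.mul (hasDerivAt_cosh u)).sub
      ((hau.cos.const_mul a).mul (hasDerivAt_sinh u))).div_const (1 + a ^ 2)).congr_deriv ?_
    field_simp
    ring
  rw [intervalIntegral.integral_eq_sub_of_hasDerivAt (fun u _ => hderiv u)
    ((by fun_prop : Continuous fun u => sin (a * u) * sinh u).intervalIntegrable _ _)]
  simp

lemma abs_hSel_le {ρ r : ℝ} (hρ : 0 ≤ ρ) (hr : 0 < r) :
    |hSel ρ r| ≤ 4 * π * (|sin (r * ρ)| * cosh ρ + r * sinh ρ) / (r * (1 + r ^ 2)) := by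
  have hnum : |sin (r * ρ) * cosh ρ - r * cos (r * ρ) * sinh ρ|
      ≤ |sin (r * ρ)| * cosh ρ + r * sinh ρ := by
    have hsinh := sinh_nonneg_iff.mpr hρ
    calc _ ≤ |sin (r * ρ) * cosh ρ| + |r * cos (r * ρ) * sinh ρ| := abs_sub _ _
      _ = |sin (r * ρ)| * cosh ρ + r * |cos (r * ρ)| * sinh ρ := by
        rw [abs_mul, abs_mul, abs_mul, abs_of_pos (cosh_pos ρ), abs_of_pos hr,
          abs_of_nonneg hsinh]
      _ ≤ |sin (r * ρ)| * cosh ρ + r * 1 * sinh ρ := by gcongr; exact abs_cos_le_one _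
      _ = _ := by ring
  rw [hSel, integral_sin_mul_sinh, abs_mul, abs_of_pos (by positivity : 0 < 4 * π / r), abs_div,
    abs_of_pos (by positivity : (0:ℝ) < 1 + r ^ 2)]
  calc 4 * π / r * (|sin (r * ρ) * cosh ρ - r * cos (r * ρ) * sinh ρ| / (1 + r ^ 2))
      ≤ 4 * π / r * ((|sin (r * ρ)| * cosh ρ + r * sinh ρ) / (1 + r ^ 2)) := by gcongr
    _ = _ := by field_simp

lemma abs_hSel_le_exp {ρ r : ℝ} (hρ : 0 ≤ ρ) (hr : 1 ≤ r) : |hSel ρ r| ≤ 4 * π * exp ρ / r ^ 2 := by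
  have hr0 : 0 < r := one_pos.trans_le hr
  have hnum : |sin (r * ρ)| * cosh ρ + r * sinh ρ ≤ r * exp ρ := by
    rw [← cosh_add_sinh, mul_add]
    gcongr ?_ + _
    calc |sin (r * ρ)| * cosh ρ ≤ 1 * cosh ρ := by gcongr; exact abs_sin_le_one _
      _ ≤ r * cosh ρ := by gcongr
  calc |hSel ρ r| ≤ 4 * π * (|sin (r * ρ)| * cosh ρ + r * sinh ρ) / (r * (1 + r ^ 2)) :=
        abs_hSel_le hρ hr0
    _ ≤ 4 * π * (r * exp ρ) / (r * (1 + r ^ 2)) := by gcongr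
    _ = 4 * π * exp ρ / (1 + r ^ 2) := by field_simp
    _ ≤ 4 * π * exp ρ / r ^ 2 := by gcongr; linarith

lemma abs_hSel_le_mul_cosh {ρ r : ℝ} (hρ : 0 ≤ ρ) (hr : 0 < r) :
    |hSel ρ r| ≤ 8 * π * ρ * cosh ρ / r ^ 2 := by
  have hnum : |sin (r * ρ)| * cosh ρ + r * sinh ρ ≤ 2 * r * ρ * cosh ρ := by
    have hsin : |sin (r * ρ)| ≤ r * ρ := abs_sin_le_abs.trans (abs_of_nonneg (by positivity)).le
    have hsinh := sinh_le_mul_cosh hρ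
    have hcosh := cosh_pos ρ
    nlinarith
  calc |hSel ρ r| ≤ 4 * π * (|sin (r * ρ)| * cosh ρ + r * sinh ρ) / (r * (1 + r ^ 2)) :=
        abs_hSel_le hρ hr
    _ ≤ 4 * π * (2 * r * ρ * cosh ρ) / (r * (1 + r ^ 2)) := by gcongr
    _ = 8 * π * ρ * cosh ρ / (1 + r ^ 2) := by field_simp; ring
    _ ≤ 8 * π * ρ * cosh ρ / r ^ 2 := by gcongr; linarith

lemma abs_hSel_le_ballVolume {η r : ℝ} (hη : 0 ≤ η) (hr : 0 < r) :
    |hSel η r| ≤ π * (sinh (2 * η) - 2 * η) := by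
  have hpt : ∀ u ∈ Icc 0 η, |sin (r * u) * sinh u| ≤ r * sinh u ^ 2 := fun u hu => by
    have hsinh := sinh_nonneg_iff.mpr hu.1
    rw [abs_mul, abs_of_nonneg hsinh, sq, ← mul_assoc]
    gcongr
    exact abs_sin_le_abs.trans ((abs_of_nonneg (mul_nonneg hr.le hu.1)).trans_le
      (by gcongr; exact self_le_sinh_iff.mpr hu.1))
  have hint : |∫ u in (0:ℝ)..η, sin (r * u) * sinh u| ≤ r * ((sinh (2 * η) - 2 * η) / 4) := by
    rw [← integral_sinh_sq, ← intervalIntegral.integral_const_mul]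
    refine (intervalIntegral.abs_integral_le_integral_abs hη).trans ?_
    exact intervalIntegral.integral_mono_on hη
      ((by fun_prop : Continuous fun u => |sin (r * u) * sinh u|).intervalIntegrable _ _)
      ((by fun_prop : Continuous fun u => r * sinh u ^ 2).intervalIntegrable _ _) hpt
  rw [hSel, abs_mul, abs_of_pos (by positivity : 0 < 4 * π / r)]
  calc 4 * π / r * |∫ u in (0:ℝ)..η, sin (r * u) * sinh u|
      ≤ 4 * π / r * (r * ((sinh (2 * η) - 2 * η) / 4)) := by gcongr
    _ = _ := by field_simp

lemma le_mul_rpow_of_le_one_of_le_mul {x K t θ : ℝ} (hK : 1 ≤ K) (ht : 0 ≤ t) (hθ0 : 0 ≤ θ)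
    (hθ1 : θ ≤ 1) (h1 : x ≤ 1) (h2 : x ≤ K * t) : x ≤ K * t ^ θ := by
  rcases le_total t 1 with ht1 | ht1
  · exact h2.trans (by gcongr; exact self_le_rpow_of_le_one ht ht1 hθ1)
  · exact h1.trans (one_le_mul_of_one_le_of_one_le hK (one_le_rpow ht1 hθ0))

lemma abs_hSel_div_ballVolume_le {η r A : ℝ} (hη : 0 < η) (hη1 : η ≤ 1) (hr : 0 < r)
    (hA0 : 0 ≤ A) (hA2 : A ≤ 2) :
    |hSel η r| / (π * (sinh (2 * η) - 2 * η)) ≤ 6 * cosh 1 * (η * r) ^ (-A) := by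
  have hvol : π * (4 * η ^ 3 / 3) ≤ π * (sinh (2 * η) - 2 * η) := by
    gcongr; exact cube_le_sinh_two_mul_sub hη.le
  have hvol0 : 0 < π * (4 * η ^ 3 / 3) := by positivity
  have hle_one : |hSel η r| / (π * (sinh (2 * η) - 2 * η)) ≤ 1 :=
    div_le_one_of_le₀ (abs_hSel_le_ballVolume hη.le hr) (hvol0.trans_le hvol).le
  have hcosh : cosh η ≤ cosh 1 := cosh_le_cosh.mpr (by rw [abs_of_pos hη, abs_one]; exact hη1)
  have hdecay : |hSel η r| / (π * (sinh (2 * η) - 2 * η)) ≤ 6 * cosh 1 * (η * r) ^ (-2 : ℝ) :=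
    calc |hSel η r| / (π * (sinh (2 * η) - 2 * η))
        ≤ (8 * π * η * cosh η / r ^ 2) / (π * (4 * η ^ 3 / 3)) := by
          gcongr
          exact abs_hSel_le_mul_cosh hη.le hr
      _ = 6 * cosh η * ((η * r) ^ 2)⁻¹ := by field_simp; ring
      _ ≤ 6 * cosh 1 * (η * r) ^ (-2 : ℝ) := by
          rw [rpow_neg (by positivity), rpow_two]
          gcongr
  have hinterp := le_mul_rpow_of_le_one_of_le_mul (θ := A / 2)
    (by linarith [one_le_cosh (1:ℝ)]) (by positivity) (by linarith) (by linarith) hle_one hdecay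
  rwa [← rpow_mul (by positivity), show (-2) * (A / 2) = -A by ring] at hinterp

lemma abs_hPM_le {R η s r A : ℝ} (hR : 1 ≤ R) (hη : 0 < η) (hη1 : η ≤ 1) (hs : |s| ≤ 1)
    (hr : 1 ≤ r) (hA0 : 0 ≤ A) (hA2 : A ≤ 2) :
    |hPM R η s r| ≤ 24 * π * exp 1 * cosh 1 * exp R * η ^ (-A) * r ^ (-(2 + A)) := by
  have hr0 : 0 < r := one_pos.trans_le hr
  have hsη : |s * η| ≤ 1 := by
    rw [abs_mul, abs_of_pos hη]; nlinarith [abs_nonneg s]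
  obtain ⟨hsη_lo, hsη_hi⟩ := abs_le.mp hsη
  have hvol : 0 < π * (sinh (2 * η) - 2 * η) :=
    mul_pos pi_pos (by linarith [self_lt_sinh_iff.mpr (by positivity : 0 < 2 * η)])
  have hmain : |hSel (R + s * η) r| ≤ 4 * π * exp (R + 1) / r ^ 2 :=
    (abs_hSel_le_exp (by linarith) hr).trans (by gcongr)
  rw [hPM, abs_div, abs_mul, abs_of_pos hvol, mul_div_assoc]
  calc |hSel (R + s * η) r| * (|hSel η r| / (π * (sinh (2 * η) - 2 * η)))
      ≤ 4 * π * exp (R + 1) / r ^ 2 * (6 * cosh 1 * (η * r) ^ (-A)) :=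
        mul_le_mul hmain (abs_hSel_div_ballVolume_le hη hη1 hr0 hA0 hA2) (by positivity)
          (by positivity)
    _ = _ := by
        rw [exp_add, mul_rpow hη.le hr0.le, rpow_neg hη.le, rpow_neg hr0.le, rpow_neg hr0.le,
          rpow_add hr0, rpow_two]
        field_simp
        norm_num

open Finset

lemma pow_log_floor_le (b : ℕ) {x : ℝ} (hx : 1 ≤ x) : (b : ℝ) ^ Nat.log b ⌊x⌋₊ ≤ x := by
  have h := Nat.pow_log_le_self b (Nat.one_le_iff_ne_zero.mp (Nat.le_floor (by exact_mod_cast hx)))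
  calc (b : ℝ) ^ Nat.log b ⌊x⌋₊ ≤ ⌊x⌋₊ := by exact_mod_cast h
    _ ≤ x := Nat.floor_le (by linarith)

lemma lt_pow_succ_log_floor {b : ℕ} (hb : 1 < b) (x : ℝ) : x < (b : ℝ) ^ (Nat.log b ⌊x⌋₊ + 1) := by
  have h := Nat.lt_pow_succ_log_self hb ⌊x⌋₊
  calc x < ⌊x⌋₊ + 1 := Nat.lt_floor_add_one x
    _ ≤ (b : ℝ) ^ (Nat.log b ⌊x⌋₊ + 1) := by exact_mod_cast h

variable {ι : Type*}

lemma sum_rpow_neg_mul_le_of_sum_le_rpow (r w : ι → ℝ) {K E σ : ℝ} (hr : ∀ j, 1 ≤ r j)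
    (hw : ∀ j, 0 ≤ w j) (hK : 0 ≤ K) (hσ : 0 ≤ σ) (hEσ : E < σ)
    (hS : ∀ T, 1 ≤ T → ∀ v : Finset ι, (∀ j ∈ v, r j ≤ T) → ∑ j ∈ v, w j ≤ K * T ^ E)
    (u : Finset ι) :
    ∑ j ∈ u, r j ^ (-σ) * w j ≤ K * 2 ^ E / (1 - 2 ^ (E - σ)) := by
  classical
  set k : ι → ℕ := fun j => Nat.log 2 ⌊r j⌋₊
  set x : ℝ := 2 ^ (E - σ) with hx
  have hx1 : x < 1 := rpow_lt_one_of_one_lt_of_neg one_lt_two (by linarith)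
  have hshell : ∀ m : ℕ, ∑ j ∈ u with k j = m, r j ^ (-σ) * w j ≤ K * 2 ^ E * x ^ m := by
    intro m
    set v := {j ∈ u | k j = m}
    have hlow : ∀ j ∈ v, (2 : ℝ) ^ m ≤ r j := fun j hj => by
      rw [← (mem_filter.mp hj).2]; exact_mod_cast pow_log_floor_le 2 (hr j)
    have hhigh : ∀ j ∈ v, r j ≤ 2 ^ (m + 1) := fun j hj => by
      rw [← (mem_filter.mp hj).2]; exact_mod_cast (lt_pow_succ_log_floor one_lt_two (r j)).le
    calc ∑ j ∈ v, r j ^ (-σ) * w j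
        ≤ ∑ j ∈ v, ((2 : ℝ) ^ m) ^ (-σ) * w j :=
          sum_le_sum fun j hj => mul_le_mul_of_nonneg_right
            (rpow_le_rpow_of_nonpos (by positivity) (hlow j hj) (by linarith)) (hw j)
      _ = ((2 : ℝ) ^ m) ^ (-σ) * ∑ j ∈ v, w j := (mul_sum _ _ _).symm
      _ ≤ ((2 : ℝ) ^ m) ^ (-σ) * (K * ((2 : ℝ) ^ (m + 1)) ^ E) :=
          mul_le_mul_of_nonneg_left (hS _ (one_le_pow₀ one_le_two) _ hhigh) (by positivity)
      _ = K * 2 ^ E * x ^ m := by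
          rw [← rpow_pow_comm zero_le_two, ← rpow_pow_comm zero_le_two, hx, sub_eq_add_neg,
            rpow_add two_pos, mul_pow, pow_succ]
          ring
  have hmaps : ∀ j ∈ u, k j ∈ range (u.sup k + 1) :=
    fun j hj => mem_range.mpr (Nat.lt_succ_of_le (le_sup hj))
  calc ∑ j ∈ u, r j ^ (-σ) * w j
      = ∑ m ∈ range (u.sup k + 1), ∑ j ∈ u with k j = m, r j ^ (-σ) * w j :=
        (sum_fiberwise_of_maps_to hmaps _).symm
    _ ≤ ∑ m ∈ range (u.sup k + 1), K * 2 ^ E * x ^ m := sum_le_sum fun m _ => hshell m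
    _ = K * 2 ^ E * ∑ m ∈ range (u.sup k + 1), x ^ m := (mul_sum _ _ _).symm
    _ ≤ K * 2 ^ E * (x ^ 0 / (1 - x)) := by
        gcongr
        rw [range_eq_Ico]
        exact geom_sum_Ico_le_of_lt_one (by positivity) hx1
    _ = K * 2 ^ E / (1 - x) := by rw [pow_zero, mul_one_div]

lemma sum_le_sqrt_mul_rpow_of_card_le {r f : ι → ℝ} {C₀ C₁ b : ℝ} {a : ℕ}
    (hfin : ∀ T : ℝ, {j | r j ≤ T}.Finite)
    (hcount : ∀ T : ℝ, 1 ≤ T → ((hfin T).toFinset.card : ℝ) ≤ C₀ * T ^ a)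
    (hf : ∀ T : ℝ, 1 ≤ T → (∑ᶠ (j : ι) (_ : r j ≤ T), f j ^ 2) ≤ C₁ * T ^ b)
    (T : ℝ) (hT : 1 ≤ T) (v : Finset ι) (hv : ∀ j ∈ v, r j ≤ T) :
    ∑ j ∈ v, f j ≤ √(C₀ * C₁) * T ^ ((a + b) / 2) := by
  have hsub : v ⊆ (hfin T).toFinset := fun j hj => (hfin T).mem_toFinset.mpr (hv j hj)
  have hcard : (#v : ℝ) ≤ C₀ * T ^ a :=
    (Nat.cast_le.mpr (Finset.card_le_card hsub)).trans (hcount T hT)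
  have hsq : ∑ j ∈ v, f j ^ 2 ≤ C₁ * T ^ b :=
    calc ∑ j ∈ v, f j ^ 2 ≤ ∑ j ∈ (hfin T).toFinset, f j ^ 2 :=
          sum_le_sum_of_subset_of_nonneg hsub fun _ _ _ => sq_nonneg _
      _ = ∑ᶠ (j : ι) (_ : r j ≤ T), f j ^ 2 :=
          (finsum_mem_eq_finite_toFinset_sum _ (hfin T)).symm
      _ ≤ C₁ * T ^ b := hf T hT
  calc ∑ j ∈ v, f j ≤ √(C₀ * T ^ a * (C₁ * T ^ b)) :=
        le_sqrt_of_sq_le (sq_sum_le_card_mul_sum_sq.trans (mul_le_mul hcard hsq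
          (sum_nonneg fun _ _ => sq_nonneg _) ((Nat.cast_nonneg _).trans hcard)))
    _ = √(C₀ * C₁) * T ^ ((a + b) / 2) := by
        have hT0 : 0 < T := one_pos.trans_le hT
        rw [← rpow_natCast, mul_mul_mul_comm, ← rpow_add hT0, sqrt_mul' _ (by positivity),
          sqrt_eq_rpow (T ^ _), ← rpow_mul hT0.le]
        ring_nf

lemma summable_norm_and_norm_tsum_le {E : Type*} [NormedAddCommGroup E] {f : ι → E}
    {g : ι → ℝ} {L K : ℝ} (hg : ∀ j, 0 ≤ g j) (hL : 0 ≤ L) (hfg : ∀ j, ‖f j‖ ≤ L * g j)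
    (hK : ∀ u : Finset ι, ∑ j ∈ u, g j ≤ K) :
    Summable (fun j => ‖f j‖) ∧ ‖∑' j, f j‖ ≤ L * K := by
  have hgs : Summable g := summable_of_sum_le hg hK
  have hfs : Summable (fun j => ‖f j‖) :=
    Summable.of_nonneg_of_le (fun j => norm_nonneg _) hfg (hgs.mul_left L)
  refine ⟨hfs, ?_⟩
  calc ‖∑' j, f j‖ ≤ ∑' j, ‖f j‖ := norm_tsum_le_tsum_norm hfs
    _ ≤ ∑' j, L * g j := hfs.tsum_le_tsum hfg (hgs.mul_left L)
    _ = L * ∑' j, g j := tsum_mul_left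
    _ ≤ L * K := by gcongr; exact hgs.tsum_le_of_sum_le hK

/-- Under a Weyl-law count `#{j : r_j ≤ T} ≤ C₀ T³` and a quantum-variance bound
`Σ_{r_j ≤ T} |c_j|² ≤ C₁ T^{q+ε}`, the twisted smoothed spectral sum
`Σ_j h_±(r_j) c_j` converges absolutely and is `≤ C₂ R e^R η^{−(q−1)/2−ε}`. -/
theorem smoothed_spectral_sum_quantum_variance_bound
    (q ε C₀ C₁ : ℝ) (hq : q ∈ Set.Icc (1:ℝ) 3) (hε : ε ∈ Set.Ioo (0:ℝ) 1)
    (hC₀ : 0 < C₀) (hC₁ : 0 < C₁)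
    (r : ℕ → ℝ) (hr : ∀ j, 1 < r j)
    (hfin : ∀ T : ℝ, {j | r j ≤ T}.Finite)
    (hcount : ∀ T : ℝ, 1 ≤ T → ((hfin T).toFinset.card : ℝ) ≤ C₀ * T ^ 3)
    (c : ℕ → ℂ)
    (hc : ∀ T : ℝ, 1 ≤ T →
      (∑ᶠ (j : ℕ) (_ : r j ≤ T), ‖c j‖ ^ 2) ≤ C₁ * T ^ (q + ε)) :
    ∃ C₂ : ℝ, 0 < C₂ ∧ ∀ R : ℝ, 1 ≤ R → ∀ η : ℝ, 0 < η → η < 1 →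
      ∀ s : ℝ, (s = 1 ∨ s = -1) →
        Summable (fun j => ‖(hPM R η s (r j) : ℂ) * c j‖) ∧
        ‖∑' j, (hPM R η s (r j) : ℂ) * c j‖
          ≤ C₂ * R * Real.exp R * η ^ (-(q - 1)/2 - ε) := by
  obtain ⟨hq1, hq3⟩ := hq
  obtain ⟨hε0, hε1⟩ := hε
  set A := (q - 1) / 2 + ε with hA
  set E : ℝ := ((3 : ℕ) + (q + ε)) / 2 with hE
  have hEσ : E < 2 + A := by norm_num [hE, hA]; linarith
  set K := √(C₀ * C₁) * 2 ^ E / (1 - 2 ^ (E - (2 + A)))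
  have hK : 0 < K := div_pos (by positivity)
    (sub_pos.mpr (rpow_lt_one_of_one_lt_of_neg one_lt_two (by linarith)))
  have hsum : ∀ u : Finset ℕ, ∑ j ∈ u, r j ^ (-(2 + A)) * ‖c j‖ ≤ K :=
    sum_rpow_neg_mul_le_of_sum_le_rpow r (‖c ·‖) (fun j => (hr j).le) (fun j => norm_nonneg _)
      (sqrt_nonneg _) (by linarith) hEσ (sum_le_sqrt_mul_rpow_of_card_le hfin hcount hc)
  refine ⟨24 * π * exp 1 * cosh 1 * K, by positivity, fun R hR η hη0 hη1 s hs => ?_⟩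
  have hs1 : |s| ≤ 1 := by rcases hs with rfl | rfl <;> simp
  have hpointwise : ∀ j, ‖(hPM R η s (r j) : ℂ) * c j‖
      ≤ 24 * π * exp 1 * cosh 1 * exp R * η ^ (-A) * (r j ^ (-(2 + A)) * ‖c j‖) := fun j => by
    rw [norm_mul, Complex.norm_real, norm_eq_abs, ← mul_assoc]
    exact mul_le_mul_of_nonneg_right
      (abs_hPM_le hR hη0 hη1.le hs1 (hr j).le (by linarith) (by linarith)) (norm_nonneg _)
  obtain ⟨hsummable, hnorm⟩ := summable_norm_and_norm_tsum_le
    (fun j => mul_nonneg (rpow_nonneg (zero_le_one.trans (hr j).le) _) (norm_nonneg (c j)))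
    (by positivity) hpointwise hsum
  refine ⟨hsummable, hnorm.trans ?_⟩
  rw [show -(q - 1) / 2 - ε = -A by ring]
  calc 24 * π * exp 1 * cosh 1 * exp R * η ^ (-A) * K
      = 24 * π * exp 1 * cosh 1 * K * 1 * exp R * η ^ (-A) := by ring
    _ ≤ 24 * π * exp 1 * cosh 1 * K * R * exp R * η ^ (-A) := by gcongr
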